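/- arXiv:1506.04225 — 3 statements merged into one kernel-verified Lean document; each statement's English description precedes it below -/
import Mathlib

section
/- No 3-critical graph G contains five distinct vertices v1, v2, v3, v4, v5 such that v1 and v5 have degree 2 in G, v2, v3, v4 have degree 3 in G, and v1v2, v2v3, v3v4, v4v1, v3v5 are all edges of G (that is, a 4-cycle through a 2-vertex v1 whose opposite vertex v3 has a 2-neighbor v5). -/
/-- A proper edge coloring of `G` with `n` colors: edges sharing an endpoint
get distinct colors. -/
def EdgeColorable {V : Type*} (G : SimpleGraph V) (n : ℕ) : Prop :=
  ∃ C : G.edgeSet → Fin n, ∀ e₁ e₂ : G.edgeSet, e₁ ≠ e₂ →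
    (∃ v, v ∈ (e₁ : Sym2 V) ∧ v ∈ (e₂ : Sym2 V)) → C e₁ ≠ C e₂

/-- The chromatic index (edge chromatic number) of `G`. -/
noncomputable def chromIndex {V : Type*} (G : SimpleGraph V) : ℕ :=
  sInf {n | EdgeColorable G n}

/-- The degree of a vertex. -/
noncomputable def deg {V : Type*} (G : SimpleGraph V) (v : V) : ℕ :=
  (G.neighborSet v).ncard

/-- A graph with maximum degree `k` is `k`-critical if `χ'(G) = k + 1` and
`χ'(G - e) = k` for every edge `e`. -/
def IsCritical {V : Type*} (k : ℕ) (G : SimpleGraph V) : Prop :=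
  (∀ v, deg G v ≤ k) ∧ (∃ v, deg G v = k) ∧
  chromIndex G = k + 1 ∧
  ∀ e ∈ G.edgeSet, chromIndex (G.deleteEdges {e}) = k

/-- The Hajós join of `G₁` and `G₂` along edges `v₁v₂` and `v₃v₄`: delete the
two edges, identify `v₁` with `v₃`, and add the edge `v₂v₄`. -/
def hajosJoin {V₁ V₂ : Type*} (G₁ : SimpleGraph V₁) (G₂ : SimpleGraph V₂)
    (v₁ v₂ : V₁) (v₃ v₄ : V₂) :
    SimpleGraph (V₁ ⊕ {x : V₂ // x ≠ v₃}) :=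
  SimpleGraph.fromRel fun a b =>
    match a, b with
    | Sum.inl x, Sum.inl y => G₁.Adj x y ∧ s(x, y) ≠ s(v₁, v₂)
    | Sum.inl x, Sum.inr y => (x = v₁ ∧ G₂.Adj v₃ y.1 ∧ y.1 ≠ v₄) ∨ (x = v₂ ∧ y.1 = v₄)
    | Sum.inr _, Sum.inl _ => False
    | Sum.inr x, Sum.inr y => G₂.Adj x.1 y.1 ∧ s(x.1, y.1) ≠ s(v₃, v₄)

/-- `G` is a Hajós join of `G₁` and `G₂`. -/
def IsHajosJoin {W V₁ V₂ : Type*} (G : SimpleGraph W)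
    (G₁ : SimpleGraph V₁) (G₂ : SimpleGraph V₂) : Prop :=
  ∃ (v₁ v₂ : V₁) (v₃ v₄ : V₂), G₁.Adj v₁ v₂ ∧ G₂.Adj v₃ v₄ ∧
    Nonempty (G ≃g hajosJoin G₁ G₂ v₁ v₂ v₃ v₄)

/-- Vertices of the Petersen graph: 2-element subsets of a 5-element set. -/
abbrev KVert : Type := {s : Finset (Fin 5) // s.card = 2}

/-- The Petersen graph, as the Kneser graph K(5,2). -/
def Petersen : SimpleGraph KVert where
  Adj a b := Disjoint a.1 b.1
  symm := ⟨fun a b h => h.symm⟩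
  loopless := ⟨fun a h => by
    have h2 := a.2
    have h' : (a.1 : Finset (Fin 5)) = ∅ := disjoint_self.mp h
    rw [h'] at h2
    simp at h2⟩

/-- A fixed vertex of the Petersen graph. -/
def pstarV : KVert := ⟨{0, 1}, by decide⟩

/-- The vertex set of the Petersen graph minus one vertex. -/
abbrev PV : Type := {x : KVert // x ≠ pstarV}

/-- `P*`: the Petersen graph with one vertex deleted. -/
def PStar : SimpleGraph PV where
  Adj a b := Petersen.Adj a.1 b.1
  symm := ⟨fun a b h => Petersen.adj_symm h⟩
  loopless := ⟨fun a h => Petersen.irrefl h⟩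

/-!
Delete the edge `v₃v₅` and 3-edge-colour what remains, as criticality allows. Recolouring the
five edges `v₁v₂, v₂v₃, v₃v₄, v₄v₁, v₃v₅` extends the colouring to `G`, unless the 4-cycle
alternates between two colours `a, b` and the other edge `v₅w` at `v₅` has the third colour `k`.
In that case `v₁`, `v₃` and `v₅` all have degree one in the subgraph of `a`- and `k`-coloured
edges. That subgraph has maximum degree two, so by counting edges none of its components holds
three such vertices; swapping `a` and `k` on the component of `v₁` therefore yields a colouring of
the first kind, and `χ'(G) = 3`.
-/

open SimpleGraph

section

variable {V W α : Type*}

section EdgeColoring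

def IsProperEdgeColoringAt (G : SimpleGraph V) (c : Sym2 V → α) (u : V) : Prop :=
  ∀ ⦃v w⦄, G.Adj u v → G.Adj u w → v ≠ w → c s(u, v) ≠ c s(u, w)

/-- Edge colourings are total functions on `Sym2 V`; only their values on edges matter. -/
def IsProperEdgeColoring (G : SimpleGraph V) (c : Sym2 V → α) : Prop :=
  ∀ u, IsProperEdgeColoringAt G c u

variable {G : SimpleGraph V} {c : Sym2 V → α} {u x y z : V}

theorem isProperEdgeColoringAt_of_neighborSet_subset_pair (h : G.neighborSet u ⊆ {x, y})
    (hxy : c s(u, x) ≠ c s(u, y)) : IsProperEdgeColoringAt G c u := by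
  intro v w hv hw hvw
  rcases h hv with rfl | rfl <;> rcases h hw with rfl | rfl
  all_goals first | exact absurd rfl hvw | exact hxy | exact hxy.symm

theorem isProperEdgeColoringAt_of_neighborSet_subset_triple (h : G.neighborSet u ⊆ {x, y, z})
    (hxy : c s(u, x) ≠ c s(u, y)) (hxz : c s(u, x) ≠ c s(u, z)) (hyz : c s(u, y) ≠ c s(u, z)) :
    IsProperEdgeColoringAt G c u := by
  intro v w hv hw hvw
  rcases h hv with rfl | rfl | rfl <;> rcases h hw with rfl | rfl | rfl
  all_goals first | exact absurd rfl hvw | assumption | exact Ne.symm ‹_›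

theorem IsProperEdgeColoringAt.congr_of_adj {G' : SimpleGraph V} {c' : Sym2 V → α}
    (hc : IsProperEdgeColoringAt G' c u) (hG : ∀ v, G.Adj u v → G'.Adj u v)
    (hcc' : ∀ v, G.Adj u v → c' s(u, v) = c s(u, v)) : IsProperEdgeColoringAt G c' u :=
  fun v w hv hw hvw => by rw [hcc' v hv, hcc' w hw]; exact hc (hG v hv) (hG w hw) hvw

theorem EdgeColorable.exists_isProperEdgeColoring {n : ℕ} [NeZero n] (h : EdgeColorable G n) :
    ∃ c : Sym2 V → Fin n, IsProperEdgeColoring G c := by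
  classical
  obtain ⟨C, hC⟩ := h
  refine ⟨fun e => if he : e ∈ G.edgeSet then C ⟨e, he⟩ else 0, fun u v w hv hw hvw => ?_⟩
  dsimp only
  rw [dif_pos (G.mem_edgeSet.mpr hv), dif_pos (G.mem_edgeSet.mpr hw)]
  refine hC _ _ ?_ ⟨u, Sym2.mem_mk_left u v, Sym2.mem_mk_left u w⟩
  simp [hvw, hv.ne']

theorem IsProperEdgeColoring.edgeColorable {n : ℕ} {c : Sym2 V → Fin n}
    (hc : IsProperEdgeColoring G c) : EdgeColorable G n := by
  refine ⟨fun e => c e, fun ⟨e₁, he₁⟩ ⟨e₂, he₂⟩ hne ⟨u, hu₁, hu₂⟩ => ?_⟩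
  obtain ⟨v, rfl⟩ := Sym2.mem_iff_exists.mp hu₁
  obtain ⟨w, rfl⟩ := Sym2.mem_iff_exists.mp hu₂
  exact hc u he₁ he₂ fun hvw => hne (by subst hvw; rfl)

theorem not_edgeColorable_of_lt_chromIndex {n : ℕ} (h : n < chromIndex G) :
    ¬ EdgeColorable G n :=
  fun hn => (Nat.sInf_le hn).not_gt h

theorem edgeColorable_chromIndex (h : chromIndex G ≠ 0) : EdgeColorable G (chromIndex G) :=
  Nat.sInf_mem (Nat.nonempty_of_pos_sInf (Nat.pos_of_ne_zero h))

end EdgeColoring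

section Kempe

variable {G : SimpleGraph V} {c : Sym2 V → α} {i j : α}

def kempeGraph (G : SimpleGraph V) (c : Sym2 V → α) (i j : α) : SimpleGraph V where
  Adj u v := G.Adj u v ∧ (c s(u, v) = i ∨ c s(u, v) = j)
  symm := ⟨fun u v h => by rw [Sym2.eq_swap]; exact ⟨h.1.symm, h.2⟩⟩
  loopless := ⟨fun u h => G.irrefl h.1⟩

theorem kempeGraph_adj {u v : V} :
    (kempeGraph G c i j).Adj u v ↔ G.Adj u v ∧ (c s(u, v) = i ∨ c s(u, v) = j) :=
  Iff.rfl

theorem IsProperEdgeColoring.deg_kempeGraph_le_two (hc : IsProperEdgeColoring G c) (u : V) :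
    deg (kempeGraph G c i j) u ≤ 2 :=
  calc deg (kempeGraph G c i j) u ≤ ({i, j} : Set α).ncard :=
        Set.ncard_le_ncard_of_injOn (fun v => c s(u, v)) (fun _ hv => (kempeGraph_adj.mp hv).2)
          (fun _ hv _ hw h => by_contra fun hne =>
            hc u (kempeGraph_adj.mp hv).1 (kempeGraph_adj.mp hw).1 hne h)
    _ ≤ 2 := (Set.ncard_insert_le i {j}).trans (by rw [Set.ncard_singleton])

variable [DecidableEq α] {R : Set V}

open Classical in
noncomputable def kempeSwap (c : Sym2 V → α) (i j : α) (R : Set V) (e : Sym2 V) : α :=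
  if ∃ v ∈ e, v ∈ R then Equiv.swap i j (c e) else c e

theorem kempeSwap_of_mem {e : Sym2 V} (hue : u ∈ e) (hu : u ∈ R) :
    kempeSwap c i j R e = Equiv.swap i j (c e) :=
  if_pos ⟨u, hue, hu⟩

theorem kempeSwap_of_notMem (hR : ∀ ⦃u v⦄, u ∈ R → (kempeGraph G c i j).Adj u v → v ∈ R)
    {e : Sym2 V} (he : e ∈ G.edgeSet) (hue : u ∈ e) (hu : u ∉ R) : kempeSwap c i j R e = c e := by
  obtain ⟨v, rfl⟩ := Sym2.mem_iff_exists.mp hue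
  unfold kempeSwap
  split_ifs with h
  · obtain ⟨x, hx, hxR⟩ := h
    obtain rfl | rfl := Sym2.mem_iff.mp hx
    · exact absurd hxR hu
    · refine Equiv.swap_apply_of_ne_of_ne (fun hi => hu (hR hxR ?_)) (fun hj => hu (hR hxR ?_))
      · exact kempeGraph_adj.mpr ⟨G.adj_symm he, Or.inl (by rwa [Sym2.eq_swap])⟩
      · exact kempeGraph_adj.mpr ⟨G.adj_symm he, Or.inr (by rwa [Sym2.eq_swap])⟩
  · rfl

theorem IsProperEdgeColoring.kempeSwap (hc : IsProperEdgeColoring G c)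
    (hR : ∀ ⦃u v⦄, u ∈ R → (kempeGraph G c i j).Adj u v → v ∈ R) :
    IsProperEdgeColoring G (kempeSwap c i j R) := by
  intro u v w hv hw hvw
  by_cases hu : u ∈ R
  · rw [kempeSwap_of_mem (Sym2.mem_mk_left u v) hu, kempeSwap_of_mem (Sym2.mem_mk_left u w) hu]
    exact (Equiv.swap i j).injective.ne (hc u hv hw hvw)
  · rw [kempeSwap_of_notMem hR hv (Sym2.mem_mk_left u v) hu,
      kempeSwap_of_notMem hR hw (Sym2.mem_mk_left u w) hu]
    exact hc u hv hw hvw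

end Kempe

theorem SimpleGraph.Connected.eq_or_eq_or_eq_of_deg_le_one [Finite W] {K : SimpleGraph W}
    (hK : K.Connected) (hdeg : ∀ v, deg K v ≤ 2) {x y z : W}
    (hx : deg K x ≤ 1) (hy : deg K y ≤ 1) (hz : deg K z ≤ 1) : x = y ∨ x = z ∨ y = z := by
  classical
  have := Fintype.ofFinite W
  by_contra! hne
  have hdegree : ∀ v, K.degree v = deg K v := fun v => by
    rw [deg, ← K.card_neighborSet_eq_degree, Set.ncard_eq_toFinset_card', Set.toFinset_card]
  set s : Finset W := {x, y, z}
  have hs : s.card = 3 := Finset.card_eq_three.mpr ⟨x, y, z, hne.1, hne.2.1, hne.2.2, rfl⟩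
  have hin : ∑ v ∈ s, K.degree v ≤ ∑ v ∈ s, 1 :=
    Finset.sum_le_sum fun v hv => by
      rw [hdegree]
      simp only [s, Finset.mem_insert, Finset.mem_singleton] at hv
      rcases hv with rfl | rfl | rfl <;> assumption
  have hout : ∑ v ∈ sᶜ, K.degree v ≤ ∑ v ∈ sᶜ, 2 :=
    Finset.sum_le_sum fun v _ => (hdegree v).trans_le (hdeg v)
  have hsum := Finset.sum_add_sum_compl s fun v => K.degree v
  rw [K.sum_degrees_eq_twice_card_edges] at hsum
  simp only [Finset.sum_const, smul_eq_mul, mul_one, Finset.card_compl, hs] at hin hout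
  have hedges := hK.card_vert_le_card_edgeSet_add_one
  rw [Nat.card_eq_fintype_card, Nat.card_eq_fintype_card, ← edgeFinset_card] at hedges
  have : 3 ≤ Fintype.card W := hs ▸ Finset.card_le_univ s
  omega

theorem SimpleGraph.Reachable.eq_or_eq_or_eq_of_deg_le_one [Finite V] {H : SimpleGraph V}
    (hdeg : ∀ v, deg H v ≤ 2) {x y z : V} (hxy : H.Reachable x y) (hxz : H.Reachable x z)
    (hx : deg H x ≤ 1) (hy : deg H y ≤ 1) (hz : deg H z ≤ 1) : x = y ∨ x = z ∨ y = z := by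
  set C := H.connectedComponentMk x
  have hdegC : ∀ v : C, deg C.toSimpleGraph v ≤ deg H v := fun v =>
    Set.ncard_le_ncard_of_injOn Subtype.val (fun w hw => hw) Subtype.val_injective.injOn
  have hyC : y ∈ C := ConnectedComponent.eq.mpr hxy.symm
  have hzC : z ∈ C := ConnectedComponent.eq.mpr hxz.symm
  have hxC : x ∈ C := rfl
  have := C.connected_toSimpleGraph.eq_or_eq_or_eq_of_deg_le_one
    (fun v => (hdegC v).trans (hdeg v)) (x := ⟨x, hxC⟩) (y := ⟨y, hyC⟩) (z := ⟨z, hzC⟩)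
    ((hdegC _).trans hx) ((hdegC _).trans hy) ((hdegC _).trans hz)
  simpa only [Subtype.mk.injEq] using this

theorem exists_neighborSet_eq_insert [Finite V] {G : SimpleGraph V} {v : V} {S : Set V}
    (hS : S ⊆ G.neighborSet v) (hdeg : deg G v = S.ncard + 1) :
    ∃ x ∉ S, G.neighborSet v = insert x S := by
  obtain ⟨x, hx⟩ := Set.ncard_eq_one.mp (by rw [Set.ncard_sdiff hS, ← deg, hdeg]; omega :
    (G.neighborSet v \ S).ncard = 1)
  have hxN : x ∈ G.neighborSet v \ S := hx ▸ Set.mem_singleton x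
  refine ⟨x, hxN.2, ?_⟩
  rw [← Set.union_sdiff_cancel hS, hx, Set.union_singleton]

theorem neighborSet_eq_of_subset [Finite V] {G : SimpleGraph V} {v : V} {S : Set V}
    (hS : S ⊆ G.neighborSet v) (hdeg : deg G v ≤ S.ncard) : G.neighborSet v = S :=
  (Set.eq_of_subset_of_ncard_le hS hdeg).symm

structure IsConfig (G : SimpleGraph V) (v₁ v₂ v₃ v₄ v₅ x₂ x₄ w : V) : Prop where
  neighborSet_v₁ : G.neighborSet v₁ = {v₂, v₄}
  neighborSet_v₂ : G.neighborSet v₂ = {x₂, v₁, v₃}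
  neighborSet_v₃ : G.neighborSet v₃ = {v₂, v₄, v₅}
  neighborSet_v₄ : G.neighborSet v₄ = {x₄, v₁, v₃}
  neighborSet_v₅ : G.neighborSet v₅ = {w, v₃}
  ne₁₂ : v₁ ≠ v₂
  ne₁₃ : v₁ ≠ v₃
  ne₁₄ : v₁ ≠ v₄
  ne₁₅ : v₁ ≠ v₅
  ne₂₃ : v₂ ≠ v₃
  ne₂₄ : v₂ ≠ v₄
  ne₂₅ : v₂ ≠ v₅
  ne₃₄ : v₃ ≠ v₄
  ne₃₅ : v₃ ≠ v₅
  ne₄₅ : v₄ ≠ v₅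
  x₂_ne_v₁ : x₂ ≠ v₁
  x₂_ne_v₃ : x₂ ≠ v₃
  x₄_ne_v₁ : x₄ ≠ v₁
  x₄_ne_v₃ : x₄ ≠ v₃
  w_ne_v₃ : w ≠ v₃

/-- The colourings of `G - v₃v₅` that no recolouring of the 4-cycle extends to `G`. -/
def IsBicoloredCycle (c : Sym2 V → α) (v₁ v₂ v₃ v₄ v₅ w : V) : Prop :=
  c s(v₁, v₂) = c s(v₃, v₄) ∧ c s(v₄, v₁) = c s(v₂, v₃) ∧
    c s(v₅, w) ≠ c s(v₂, v₃) ∧ c s(v₅, w) ≠ c s(v₃, v₄)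

namespace IsConfig

variable {G : SimpleGraph V} {v₁ v₂ v₃ v₄ v₅ x₂ x₄ w : V}

theorem isProperEdgeColoring_update [DecidableEq V] (K : IsConfig G v₁ v₂ v₃ v₄ v₅ x₂ x₄ w)
    {c : Sym2 V → α} (hc : IsProperEdgeColoring (G.deleteEdges {s(v₃, v₅)}) c) {p q r s m : α}
    (hpq : p ≠ q) (hqr : q ≠ r) (hrs : r ≠ s) (hsp : s ≠ p)
    (hp : p ≠ c s(v₂, x₂)) (hq : q ≠ c s(v₂, x₂)) (hr : r ≠ c s(v₄, x₄)) (hs : s ≠ c s(v₄, x₄))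
    (hmq : m ≠ q) (hmr : m ≠ r) (hm : m ≠ c s(v₅, w)) :
    IsProperEdgeColoring G (Function.update (Function.update (Function.update
      (Function.update (Function.update c s(v₁, v₂) p) s(v₂, v₃) q) s(v₃, v₄) r) s(v₄, v₁) s)
      s(v₃, v₅) m) := by
  obtain ⟨N₁, N₂, N₃, N₄, N₅, h₁₂, h₁₃, h₁₄, h₁₅, h₂₃, h₂₄, h₂₅, h₃₄, h₃₅, h₄₅,
    hx₂₁, hx₂₃, hx₄₁, hx₄₃, hw₃⟩ := K
  intro u
  by_cases hu : u ≠ v₁ ∧ u ≠ v₂ ∧ u ≠ v₃ ∧ u ≠ v₄ ∧ u ≠ v₅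
  · obtain ⟨hu₁, hu₂, hu₃, hu₄, hu₅⟩ := hu
    refine (hc u).congr_of_adj (fun v huv => ?_) (fun v _ => ?_)
    · simp [deleteEdges_adj, huv, hu₃, hu₅]
    · simp [hu₁, hu₂, hu₃, hu₄, hu₅]
  simp only [not_and_or, not_not] at hu
  rcases hu with rfl | rfl | rfl | rfl | rfl
  · apply isProperEdgeColoringAt_of_neighborSet_subset_pair N₁.subset
    simp [Function.update_apply, *, Ne.symm]
  · apply isProperEdgeColoringAt_of_neighborSet_subset_triple N₂.subset <;>
      simp [Function.update_apply, *, Ne.symm]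
  · apply isProperEdgeColoringAt_of_neighborSet_subset_triple N₃.subset <;>
      simp [Function.update_apply, *, Ne.symm]
  · apply isProperEdgeColoringAt_of_neighborSet_subset_triple N₄.subset <;>
      simp [Function.update_apply, *, Ne.symm]
  · apply isProperEdgeColoringAt_of_neighborSet_subset_pair N₅.subset
    simp [Function.update_apply, *, Ne.symm]

theorem cycle_colors_ne (K : IsConfig G v₁ v₂ v₃ v₄ v₅ x₂ x₄ w) {c : Sym2 V → α}
    (hc : IsProperEdgeColoring (G.deleteEdges {s(v₃, v₅)}) c) :
    c s(v₁, v₂) ≠ c s(v₂, v₃) ∧ c s(v₂, v₃) ≠ c s(v₃, v₄) ∧ c s(v₃, v₄) ≠ c s(v₄, v₁) ∧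
      c s(v₄, v₁) ≠ c s(v₁, v₂) ∧ c s(v₂, x₂) ≠ c s(v₁, v₂) ∧ c s(v₂, x₂) ≠ c s(v₂, v₃) ∧
      c s(v₄, x₄) ≠ c s(v₃, v₄) ∧ c s(v₄, x₄) ≠ c s(v₄, v₁) := by
  obtain ⟨N₁, N₂, N₃, N₄, N₅, h₁₂, h₁₃, h₁₄, h₁₅, h₂₃, h₂₄, h₂₅, h₃₄, h₃₅, h₄₅,
    hx₂₁, hx₂₃, hx₄₁, hx₄₃, hw₃⟩ := K
  have hc' {u v v' : V} (hv : v ∈ G.neighborSet u) (hv' : v' ∈ G.neighborSet u)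
      (h : s(u, v) ≠ s(v₃, v₅)) (h' : s(u, v') ≠ s(v₃, v₅)) (hne : v ≠ v') :
      c s(u, v) ≠ c s(u, v') :=
    hc u ((deleteEdges_adj ..).mpr ⟨hv, h⟩) ((deleteEdges_adj ..).mpr ⟨hv', h'⟩) hne
  refine ⟨?_, ?_, ?_, ?_, ?_, ?_, ?_, ?_⟩
  · rw [Sym2.eq_swap (a := v₁)]; apply hc' <;> simp [*, Ne.symm]
  · rw [Sym2.eq_swap (a := v₂)]; apply hc' <;> simp [*, Ne.symm]
  · rw [Sym2.eq_swap (a := v₃)]; apply hc' <;> simp [*, Ne.symm]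
  · rw [Sym2.eq_swap (a := v₄)]; apply hc' <;> simp [*, Ne.symm]
  · rw [Sym2.eq_swap (a := v₁)]; apply hc' <;> simp [*, Ne.symm]
  · apply hc' <;> simp [*, Ne.symm]
  · rw [Sym2.eq_swap (a := v₃)]; apply hc' <;> simp [*, Ne.symm]
  · apply hc' <;> simp [*, Ne.symm]

theorem edgeColorable_of_not_isBicoloredCycle [DecidableEq V]
    (K : IsConfig G v₁ v₂ v₃ v₄ v₅ x₂ x₄ w) {c : Sym2 V → Fin 3} (hc : IsProperEdgeColoring (G.deleteEdges {s(v₃, v₅)}) c)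
    (hA : ¬ IsBicoloredCycle c v₁ v₂ v₃ v₄ v₅ w) : EdgeColorable G 3 := by
  obtain ⟨h₁₂₃, h₂₃₄, h₃₄₁, h₄₁₂, hx₂₁, hx₂₃, hx₄₃, hx₄₁⟩ := K.cycle_colors_ne hc
  unfold IsBicoloredCycle at hA
  set b' := c s(v₁, v₂)
  set a := c s(v₂, v₃)
  set b := c s(v₃, v₄)
  set a' := c s(v₄, v₁)
  set k := c s(v₅, w)
  by_cases hk : k = a ∨ k = b
  · obtain ⟨m, hma, hmb⟩ := Fin.exists_ne_and_ne_of_two_lt a b (by norm_num)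
    refine (K.isProperEdgeColoring_update (p := b') (q := a) (r := b) (s := a') (m := m) hc
      ?_ ?_ ?_ ?_ ?_ ?_ ?_ ?_ ?_ ?_ ?_).edgeColorable <;> omega
  -- `k` is now the third colour and sits on the cycle at `v₁`; move it next to `v₃`.
  · obtain h | h : b' = k ∨ a' = k := by omega
    · refine (K.isProperEdgeColoring_update (p := a) (q := k) (r := a) (s := b) (m := b) hc
        ?_ ?_ ?_ ?_ ?_ ?_ ?_ ?_ ?_ ?_ ?_).edgeColorable <;> omega
    · refine (K.isProperEdgeColoring_update (p := a) (q := b) (r := k) (s := b) (m := a) hc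
        ?_ ?_ ?_ ?_ ?_ ?_ ?_ ?_ ?_ ?_ ?_).edgeColorable <;> omega

theorem not_reachable_of_isBicoloredCycle [Finite V] (K : IsConfig G v₁ v₂ v₃ v₄ v₅ x₂ x₄ w)
    {c : Sym2 V → α} (hc : IsProperEdgeColoring (G.deleteEdges {s(v₃, v₅)}) c)
    (hA : IsBicoloredCycle c v₁ v₂ v₃ v₄ v₅ w)
    (h₃ : (kempeGraph (G.deleteEdges {s(v₃, v₅)}) c (c s(v₂, v₃)) (c s(v₅, w))).Reachable v₁ v₃) :
    ¬ (kempeGraph (G.deleteEdges {s(v₃, v₅)}) c (c s(v₂, v₃)) (c s(v₅, w))).Reachable v₁ v₅ := by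
  set H := kempeGraph (G.deleteEdges {s(v₃, v₅)}) c (c s(v₂, v₃)) (c s(v₅, w))
  obtain ⟨hα, -, -, hkb⟩ := hA
  obtain ⟨-, hab, -⟩ := K.cycle_colors_ne hc
  have adj {u v : V} (huv : H.Adj u v) : v ∈ G.neighborSet u ∧ s(u, v) ≠ s(v₃, v₅) := by
    simpa using (deleteEdges_adj ..).mp (kempeGraph_adj.mp huv).1
  have not_adj {u v : V} (huv : H.Adj u v) (hcol : c s(u, v) = c s(v₃, v₄)) : False := by
    rcases (kempeGraph_adj.mp huv).2 with h | h
    exacts [hab (h.symm.trans hcol), hkb (h.symm.trans hcol)]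
  have leaf {u x : V} (h : ∀ v, H.Adj u v → v = x) : deg H u ≤ 1 :=
    (Set.ncard_le_ncard fun v hv => h v hv).trans (Set.ncard_singleton x).le
  have hleaf₁ : deg H v₁ ≤ 1 := leaf fun v hv => by
    have hv' := (adj hv).1
    rw [K.neighborSet_v₁] at hv'
    rcases hv' with h | h
    · rw [h] at hv; exact (not_adj hv hα).elim
    · exact h
  have hleaf₃ : deg H v₃ ≤ 1 := leaf fun v hv => by
    obtain ⟨hv', hne⟩ := adj hv
    rw [K.neighborSet_v₃] at hv'
    rcases hv' with h | h | h
    · exact h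
    · rw [h] at hv; exact (not_adj hv rfl).elim
    · exact absurd (by rw [h]) hne
  have hleaf₅ : deg H v₅ ≤ 1 := leaf fun v hv => by
    obtain ⟨hv', hne⟩ := adj hv
    rw [K.neighborSet_v₅] at hv'
    rcases hv' with h | h
    · exact h
    · exact absurd (by rw [h, Sym2.eq_swap]) hne
  intro h₅
  rcases h₃.eq_or_eq_or_eq_of_deg_le_one hc.deg_kempeGraph_le_two h₅ hleaf₁ hleaf₃ hleaf₅
    with h | h | h
  exacts [K.ne₁₃ h, K.ne₁₅ h, K.ne₃₅ h]

theorem exists_not_isBicoloredCycle [Finite V] [DecidableEq α]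
    (K : IsConfig G v₁ v₂ v₃ v₄ v₅ x₂ x₄ w) {c : Sym2 V → α}
    (hc : IsProperEdgeColoring (G.deleteEdges {s(v₃, v₅)}) c) :
    ∃ c' : Sym2 V → α, IsProperEdgeColoring (G.deleteEdges {s(v₃, v₅)}) c' ∧
      ¬ IsBicoloredCycle c' v₁ v₂ v₃ v₄ v₅ w := by
  by_cases hA : IsBicoloredCycle c v₁ v₂ v₃ v₄ v₅ w
  swap
  · exact ⟨c, hc, hA⟩
  obtain ⟨hα, hβ, hka, hkb⟩ := hA
  set G' := G.deleteEdges {s(v₃, v₅)}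
  have adj {u v : V} (huv : v ∈ G.neighborSet u) (h : s(u, v) ≠ s(v₃, v₅)) : G'.Adj u v :=
    (deleteEdges_adj ..).mpr ⟨huv, h⟩
  have a₁₄ : G'.Adj v₁ v₄ := adj (by simp [K.neighborSet_v₁]) (by simp [K.ne₁₃, K.ne₁₅])
  have a₂₃ : G'.Adj v₂ v₃ := adj (by simp [K.neighborSet_v₂]) (by simp [K.ne₂₃, K.ne₂₅])
  have a₅w : G'.Adj v₅ w := adj (by simp [K.neighborSet_v₅]) (by simp [K.ne₃₅.symm, K.w_ne_v₃])
  set H := kempeGraph G' c (c s(v₂, v₃)) (c s(v₅, w))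
  set R := {v | H.Reachable v₁ v}
  have hR : ∀ ⦃u v⦄, u ∈ R → H.Adj u v → v ∈ R := fun u v hu huv => hu.trans huv.reachable
  have hH₁₄ : H.Adj v₁ v₄ := kempeGraph_adj.mpr ⟨a₁₄, Or.inl (by rw [Sym2.eq_swap]; exact hβ)⟩
  have hv₄ : v₄ ∈ R := hH₁₄.reachable
  refine ⟨kempeSwap c (c s(v₂, v₃)) (c s(v₅, w)) R, hc.kempeSwap hR, fun ⟨_, h₄₁, h₅, _⟩ => ?_⟩
  rw [kempeSwap_of_mem (Sym2.mem_mk_left v₄ v₁) hv₄, hβ, Equiv.swap_apply_left] at h₄₁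
  by_cases hv₃ : v₃ ∈ R
  · have hv₅ : v₅ ∉ R := K.not_reachable_of_isBicoloredCycle hc ⟨hα, hβ, hka, hkb⟩ hv₃
    rw [kempeSwap_of_mem (Sym2.mem_mk_right v₂ v₃) hv₃, Equiv.swap_apply_left,
      kempeSwap_of_notMem hR a₅w (Sym2.mem_mk_left v₅ w) hv₅] at h₅
    exact h₅ rfl
  · rw [kempeSwap_of_notMem hR a₂₃ (Sym2.mem_mk_right v₂ v₃) hv₃] at h₄₁
    exact hka h₄₁

theorem exists_of_deg [Finite V] (h : [v₁, v₂, v₃, v₄, v₅].Pairwise (· ≠ ·))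
    (hd₁ : deg G v₁ = 2) (hd₅ : deg G v₅ = 2) (hd₂ : deg G v₂ = 3) (hd₃ : deg G v₃ = 3)
    (hd₄ : deg G v₄ = 3) (a₁₂ : G.Adj v₁ v₂) (a₂₃ : G.Adj v₂ v₃) (a₃₄ : G.Adj v₃ v₄)
    (a₄₁ : G.Adj v₄ v₁) (a₃₅ : G.Adj v₃ v₅) : ∃ x₂ x₄ w, IsConfig G v₁ v₂ v₃ v₄ v₅ x₂ x₄ w := by
  simp only [List.pairwise_cons, List.mem_cons, List.not_mem_nil, or_false, forall_eq_or_imp,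
    forall_eq, IsEmpty.forall_iff, implies_true, List.Pairwise.nil, and_true] at h
  obtain ⟨⟨h₁₂, h₁₃, h₁₄, h₁₅⟩, ⟨h₂₃, h₂₄, h₂₅⟩, ⟨h₃₄, h₃₅⟩, h₄₅⟩ := h
  have N₁ : G.neighborSet v₁ = {v₂, v₄} :=
    neighborSet_eq_of_subset (by simp [Set.insert_subset_iff, a₁₂, a₄₁.symm])
      (by rw [hd₁, Set.ncard_pair h₂₄])
  have N₃ : G.neighborSet v₃ = {v₂, v₄, v₅} :=
    neighborSet_eq_of_subset (by simp [Set.insert_subset_iff, a₂₃.symm, a₃₄, a₃₅])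
      (by rw [hd₃, Set.ncard_insert_of_notMem (by simp [h₂₄, h₂₅]), Set.ncard_pair h₄₅])
  obtain ⟨x₂, hx₂, N₂⟩ := exists_neighborSet_eq_insert (G := G) (v := v₂) (S := {v₁, v₃})
    (by simp [Set.insert_subset_iff, a₁₂.symm, a₂₃]) (by rw [hd₂, Set.ncard_pair h₁₃])
  obtain ⟨x₄, hx₄, N₄⟩ := exists_neighborSet_eq_insert (G := G) (v := v₄) (S := {v₁, v₃})
    (by simp [Set.insert_subset_iff, a₄₁, a₃₄.symm]) (by rw [hd₄, Set.ncard_pair h₁₃])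
  obtain ⟨w, hw, N₅⟩ := exists_neighborSet_eq_insert (G := G) (v := v₅) (S := {v₃})
    (by simp [a₃₅.symm]) (by rw [hd₅, Set.ncard_singleton])
  simp only [Set.mem_insert_iff, Set.mem_singleton_iff, not_or] at hx₂ hx₄ hw
  exact ⟨x₂, x₄, w, N₁, N₂, N₃, N₄, N₅, h₁₂, h₁₃, h₁₄, h₁₅, h₂₃, h₂₄, h₂₅, h₃₄, h₃₅, h₄₅,
    hx₂.1, hx₂.2, hx₄.1, hx₄.2, hw⟩

end IsConfig

end

/-- No 3-critical graph contains a 4-cycle `v1 v2 v3 v4` through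
a 2-vertex `v1` whose opposite vertex `v3` has a 2-neighbor `v5`. -/
theorem stmt_9 {V : Type} [Fintype V] (G : SimpleGraph V) (hG : IsCritical 3 G) :
    ¬ ∃ v1 v2 v3 v4 v5 : V,
      [v1, v2, v3, v4, v5].Pairwise (· ≠ ·) ∧
      deg G v1 = 2 ∧ deg G v5 = 2 ∧
      deg G v2 = 3 ∧ deg G v3 = 3 ∧ deg G v4 = 3 ∧
      G.Adj v1 v2 ∧ G.Adj v2 v3 ∧ G.Adj v3 v4 ∧ G.Adj v4 v1 ∧ G.Adj v3 v5 := by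
  classical
  rintro ⟨v1, v2, v3, v4, v5, hne, hd1, hd5, hd2, hd3, hd4, a12, a23, a34, a41, a35⟩
  obtain ⟨-, -, hχ, hχ_del⟩ := hG
  obtain ⟨x2, x4, w, K⟩ := IsConfig.exists_of_deg hne hd1 hd5 hd2 hd3 hd4 a12 a23 a34 a41 a35
  have hχ' : chromIndex (G.deleteEdges {s(v3, v5)}) = 3 := hχ_del _ a35
  obtain ⟨c, hc⟩ := (hχ' ▸ edgeColorable_chromIndex (by omega)).exists_isProperEdgeColoring
  obtain ⟨c', hc', hA⟩ := K.exists_not_isBicoloredCycle hc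
  exact not_edgeColorable_of_lt_chromIndex (by omega)
    (K.edgeColorable_of_not_isBicoloredCycle hc' hA)
end

section
/- No 3-critical graph G contains seven distinct vertices v1, v2, v3, v4, v5, v6, v7 such that v1, v2, v3, v4 have degree 3 in G, v5, v6, v7 have degree 2 in G, and v1v2, v2v3, v3v4, v4v1, v2v5, v3v6, v4v7 are all edges of G (that is, a 4-cycle of 3-vertices, three of which have pairwise distinct 2-neighbors off the cycle). -/
theorem edgeColorable_chromIndex_s10 {V : Type*} [Finite V] (G : SimpleGraph V) :
    EdgeColorable G (chromIndex G) := by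
  refine Nat.sInf_mem (s := {n | EdgeColorable G n}) ?_
  have : Finite G.edgeSet := Set.toFinite _
  obtain ⟨n, ⟨f⟩⟩ := Finite.exists_equiv_fin G.edgeSet
  exact ⟨n, f, fun e₁ e₂ hne _ h => hne (f.injective h)⟩

theorem chromIndex_le_of_edgeColorable {V : Type*} {G : SimpleGraph V} {n : ℕ}
    (h : EdgeColorable G n) : chromIndex G ≤ n :=
  Nat.sInf_le h

section Degree

variable {V : Type*} [Finite V] {G : SimpleGraph V} {v : V} {s : Set V}

theorem neighborSet_eq_of_subset_of_deg_le (hs : s ⊆ G.neighborSet v) (h : deg G v ≤ s.ncard) :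
    G.neighborSet v = s :=
  (Set.eq_of_subset_of_ncard_le hs h).symm

theorem exists_neighborSet_eq_insert_s10 (hs : s ⊆ G.neighborSet v) (h : s.ncard + 1 = deg G v) :
    ∃ a ∉ s, G.neighborSet v = insert a s :=
  let ⟨a, ha, hins⟩ := (Set.exists_eq_insert_iff_ncard (Set.toFinite s)).mpr ⟨hs, h⟩
  ⟨a, ha, hins.symm⟩

end Degree

theorem Set.injOn_triple {α β : Type*} {f : α → β} {a b c : α} (h : [f a, f b, f c].Nodup) :
    Set.InjOn f {a, b, c} := by
  simp only [List.nodup_cons, List.mem_cons, not_or, List.not_mem_nil, not_false_eq_true,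
    List.nodup_nil, and_true] at h
  rintro p (rfl | rfl | rfl) q (rfl | rfl | rfl) hpq <;> simp_all

namespace SimpleGraph

variable {V α : Type*}

/-- Edge colourings are modelled as functions on all of `Sym2 V`; only their values on edges of
`G` matter. -/
def IsProperEdgeColoring (G : SimpleGraph V) (c : Sym2 V → α) : Prop :=
  ∀ v, Set.InjOn (fun w => c s(v, w)) (G.neighborSet v)

theorem IsProperEdgeColoring.update [DecidableEq V] {H : SimpleGraph V} {c : Sym2 V → α}
    (hc : H.IsProperEdgeColoring c) {u w : V} {k : α}
    (hu : ∀ t ∈ H.neighborSet u, t ≠ w → c s(u, t) ≠ k)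
    (hw : ∀ t ∈ H.neighborSet w, t ≠ u → c s(w, t) ≠ k) :
    H.IsProperEdgeColoring (Function.update c s(u, w) k) := by
  have hmissing : ∀ z t, t ∈ H.neighborSet z → s(z, t) ≠ s(u, w) → z ∈ s(u, w) →
      c s(z, t) ≠ k := by
    intro z t ht hne hz
    rcases Sym2.mem_iff.mp hz with rfl | rfl
    · exact hu t ht fun h => hne (h ▸ rfl)
    · exact hw t ht fun h => hne (h ▸ Sym2.eq_swap)
  intro z t₁ ht₁ t₂ ht₂ heq
  simp only [Function.update_apply] at heq
  split_ifs at heq with h₁ h₂ h₂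
  · exact Sym2.congr_right.mp (h₁.trans h₂.symm)
  · exact absurd heq.symm (hmissing z t₂ ht₂ h₂ (h₁ ▸ Sym2.mem_mk_left z t₁))
  · exact absurd heq (hmissing z t₁ ht₁ h₁ (h₂ ▸ Sym2.mem_mk_left z t₂))
  · exact hc z ht₁ ht₂ heq

open Finset in
theorem Connected.card_degree_le_one_le_two {G : SimpleGraph V} [Fintype V] [DecidableRel G.Adj]
    (hG : G.Connected) (hmax : ∀ v, G.degree v ≤ 2) : #{v | G.degree v ≤ 1} ≤ 2 := by
  have hV := hG.card_vert_le_card_edgeSet_add_one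
  rw [Nat.card_eq_fintype_card, Nat.card_eq_fintype_card, ← edgeFinset_card] at hV
  have hsum : ∑ v, (G.degree v + if G.degree v ≤ 1 then 1 else 0) ≤ ∑ _v : V, 2 :=
    sum_le_sum fun v _ => by have := hmax v; split_ifs <;> omega
  rw [sum_add_distrib, sum_boole, sum_degrees_eq_twice_card_edges, sum_const, card_univ,
    smul_eq_mul] at hsum
  push_cast at hsum
  omega

theorem ConnectedComponent.ncard_degree_le_one_le_two {G : SimpleGraph V} [Fintype V]
    [DecidableRel G.Adj] (hmax : ∀ v, G.degree v ≤ 2) (C : G.ConnectedComponent) :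
    {v | v ∈ C.supp ∧ G.degree v ≤ 1}.ncard ≤ 2 := by
  classical
  have hdeg (v : C.supp) : (G.induce C.supp).degree v = G.degree v :=
    degree_induce_of_neighborSet_subset fun w hw => (C.mem_supp_congr_adj hw).mp v.2
  have h := Connected.card_degree_le_one_le_two (G := G.induce C.supp) C.connected_toSimpleGraph
    fun v => (hdeg v).trans_le (hmax v)
  calc {v | v ∈ C.supp ∧ G.degree v ≤ 1}.ncard
      = (Subtype.val '' {v : C.supp | (G.induce C.supp).degree v ≤ 1}).ncard := by
        congr 1
        ext v
        constructor
        · rintro ⟨hv, hd⟩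
          exact ⟨⟨v, hv⟩, (hdeg _).trans_le hd, rfl⟩
        · rintro ⟨w, hw, rfl⟩
          exact ⟨w.2, (hdeg w).symm.trans_le hw⟩
    _ ≤ _ := Set.ncard_image_le (Set.toFinite _)
    _ ≤ 2 := by simpa [Set.ncard_eq_toFinset_card'] using h

section Kempe

variable (H : SimpleGraph V) (c : Sym2 V → α) (a b : α)

def kempeGraph : SimpleGraph V where
  Adj u w := H.Adj u w ∧ (c s(u, w) = a ∨ c s(u, w) = b)
  symm := ⟨fun u w h => by rwa [H.adj_comm, Sym2.eq_swap]⟩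
  loopless := ⟨fun u h => H.irrefl h.1⟩

noncomputable def kempeSwap [DecidableEq α] (v : V) (e : Sym2 V) : α :=
  open Classical in
  if ∃ t ∈ e, (H.kempeGraph c a b).Reachable v t then Equiv.swap a b (c e) else c e

variable {H c a b} {v u w : V}

theorem IsProperEdgeColoring.degree_kempeGraph_le [Fintype ((H.kempeGraph c a b).neighborSet u)]
    (hc : H.IsProperEdgeColoring c) : (H.kempeGraph c a b).degree u ≤ 2 := by
  classical
  rw [← card_neighborSet_eq_degree, ← Set.toFinset_card]
  calc ((H.kempeGraph c a b).neighborSet u).toFinset.card ≤ ({a, b} : Finset α).card := by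
        refine Finset.card_le_card_of_injOn (fun w => c s(u, w)) (fun w hw => ?_) ?_
        · simpa using (Set.mem_toFinset.mp hw).2
        · exact (hc u).mono fun w hw => (Set.mem_toFinset.mp hw).1
    _ ≤ 2 := Finset.card_le_two

theorem degree_kempeGraph_le_one {w₁ w₂ : V} [Fintype ((H.kempeGraph c a b).neighborSet u)]
    (hu : H.neighborSet u ⊆ {w₁, w₂}) (ha : c s(u, w₂) ≠ a) (hb : c s(u, w₂) ≠ b) :
    (H.kempeGraph c a b).degree u ≤ 1 := by
  have hsub : (H.kempeGraph c a b).neighborSet u ⊆ {w₁} := by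
    rintro t ⟨ht, hcol⟩
    rcases hu ht with rfl | rfl
    · rfl
    · exact absurd hcol (not_or.mpr ⟨ha, hb⟩)
  rw [← card_neighborSet_eq_degree, ← Set.toFinset_card]
  simpa using Finset.card_le_card (Set.toFinset_subset_toFinset.mpr hsub)

/-- A Kempe chain is a path or a cycle, so it has at most two ends. -/
theorem IsProperEdgeColoring.false_of_kempe_leaves [Fintype V]
    [DecidableRel (H.kempeGraph c a b).Adj] (hc : H.IsProperEdgeColoring c) {t₁ t₂ t₃ : V}
    (h₁₂ : t₁ ≠ t₂) (h₁₃ : t₁ ≠ t₃) (h₂₃ : t₂ ≠ t₃)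
    (ht : ∀ t ∈ ({t₁, t₂, t₃} : Set V),
      (H.kempeGraph c a b).Reachable v t ∧ (H.kempeGraph c a b).degree t ≤ 1) : False := by
  have hle := ConnectedComponent.ncard_degree_le_one_le_two (fun t => hc.degree_kempeGraph_le)
    ((H.kempeGraph c a b).connectedComponentMk v)
  have hsub : {t₁, t₂, t₃} ⊆ {t | t ∈ ((H.kempeGraph c a b).connectedComponentMk v).supp ∧
      (H.kempeGraph c a b).degree t ≤ 1} := fun t h =>
    ⟨ConnectedComponent.sound (ht t h).1.symm, (ht t h).2⟩
  have h3 := Set.ncard_le_ncard hsub (Set.toFinite _)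
  rw [Set.ncard_eq_three.mpr ⟨t₁, t₂, t₃, h₁₂, h₁₃, h₂₃, rfl⟩] at h3
  omega

variable [DecidableEq α]

theorem kempeSwap_of_reachable (hu : (H.kempeGraph c a b).Reachable v u) :
    H.kempeSwap c a b v s(u, w) = Equiv.swap a b (c s(u, w)) :=
  if_pos ⟨u, Sym2.mem_mk_left u w, hu⟩

theorem kempeSwap_of_ne (v : V) {e : Sym2 V} (ha : c e ≠ a) (hb : c e ≠ b) :
    H.kempeSwap c a b v e = c e := by
  unfold kempeSwap
  split_ifs
  · exact Equiv.swap_apply_of_ne_of_ne ha hb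
  · rfl

theorem kempeSwap_of_not_reachable (hu : ¬ (H.kempeGraph c a b).Reachable v u)
    (huw : H.Adj u w) : H.kempeSwap c a b v s(u, w) = c s(u, w) := by
  by_cases hab : c s(u, w) = a ∨ c s(u, w) = b
  · refine if_neg ?_
    rintro ⟨t, ht, hvt⟩
    rcases Sym2.mem_iff.mp ht with rfl | rfl
    · exact hu hvt
    · exact hu (hvt.trans (Adj.reachable ⟨huw.symm, by rwa [Sym2.eq_swap]⟩))
  · push Not at hab
    exact kempeSwap_of_ne v hab.1 hab.2

theorem reachable_of_kempeSwap_ne (huw : H.Adj u w)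
    (hne : H.kempeSwap c a b v s(u, w) ≠ c s(u, w)) : (H.kempeGraph c a b).Reachable v u :=
  by_contra fun hu => hne (kempeSwap_of_not_reachable hu huw)

theorem IsProperEdgeColoring.kempeSwap (hc : H.IsProperEdgeColoring c) :
    H.IsProperEdgeColoring (H.kempeSwap c a b v) := by
  intro u
  by_cases hu : (H.kempeGraph c a b).Reachable v u
  · exact ((Equiv.injective _).comp_injOn (hc u)).congr
      fun w _ => (kempeSwap_of_reachable hu).symm
  · exact (hc u).congr fun w hw => (kempeSwap_of_not_reachable hu hw).symm

end Kempe

end SimpleGraph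

open SimpleGraph

theorem edgeColorable_iff_exists_isProperEdgeColoring {V : Type*} {G : SimpleGraph V} {n : ℕ}
    [NeZero n] : EdgeColorable G n ↔ ∃ c : Sym2 V → Fin n, G.IsProperEdgeColoring c := by
  classical
  constructor
  · rintro ⟨C, hC⟩
    refine ⟨fun e => if he : e ∈ G.edgeSet then C ⟨e, he⟩ else 0,
      fun v w₁ hw₁ w₂ hw₂ hcol => ?_⟩
    by_contra hne
    refine hC ⟨s(v, w₁), hw₁⟩ ⟨s(v, w₂), hw₂⟩
      (fun h => hne (Sym2.congr_right.mp (congrArg Subtype.val h))) ⟨v, by simp, by simp⟩ ?_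
    dsimp only at hcol
    rwa [dif_pos (show s(v, w₁) ∈ G.edgeSet from hw₁),
      dif_pos (show s(v, w₂) ∈ G.edgeSet from hw₂)] at hcol
  · rintro ⟨c, hc⟩
    refine ⟨fun e => c e, fun ⟨e₁, he₁⟩ ⟨e₂, he₂⟩ hne ⟨v, hv₁, hv₂⟩ hcol => ?_⟩
    obtain ⟨w₁, rfl⟩ := Sym2.mem_iff_exists.mp hv₁
    obtain ⟨w₂, rfl⟩ := Sym2.mem_iff_exists.mp hv₂
    exact hne (Subtype.ext (congrArg (s(v, ·)) (hc v he₁ he₂ hcol)))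

set_option synthInstance.maxSize 1000 in
/-- `fij` is the colour of `vivj` and `ai` that of the edge leaving the configuration at `vi`
(`v1x`, `v5p5`, `v6p6`, `v7p7`). The existentials are nested vertex by vertex so that `decide`
prunes the search early. -/
theorem exists_inner_colors : ∀ a1 a5 a6 a7 : Fin 3, a5 ≠ a1 ∨ a7 ≠ a1 →
    ∃ f12 f41, [a1, f12, f41].Nodup ∧
    ∃ f23 f25, [f12, f23, f25].Nodup ∧ f25 ≠ a5 ∧
    ∃ f34 f36, [f23, f34, f36].Nodup ∧ f36 ≠ a6 ∧
    ∃ f47, [f41, f34, f47].Nodup ∧ f47 ≠ a7 := by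
  decide

structure FourCycleConfig {V : Type*} (G : SimpleGraph V) (v1 v2 v3 v4 v5 v6 v7 x p5 p6 p7 : V) :
    Prop where
  pairwise_ne : [v1, v2, v3, v4, v5, v6, v7].Pairwise (· ≠ ·)
  x_ne_v2 : x ≠ v2
  x_ne_v4 : x ≠ v4
  p5_ne_v2 : p5 ≠ v2
  p6_ne_v3 : p6 ≠ v3
  p7_ne_v4 : p7 ≠ v4
  neighborSet_v1 : G.neighborSet v1 = {x, v2, v4}
  neighborSet_v2 : G.neighborSet v2 = {v1, v3, v5}
  neighborSet_v3 : G.neighborSet v3 = {v2, v4, v6}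
  neighborSet_v4 : G.neighborSet v4 = {v1, v3, v7}
  neighborSet_v5 : G.neighborSet v5 = {p5, v2}
  neighborSet_v6 : G.neighborSet v6 = {p6, v3}
  neighborSet_v7 : G.neighborSet v7 = {p7, v4}

namespace FourCycleConfig

variable {V : Type*} {G : SimpleGraph V} {v1 v2 v3 v4 v5 v6 v7 x p5 p6 p7 : V}
  (hc : FourCycleConfig G v1 v2 v3 v4 v5 v6 v7 x p5 p6 p7)
include hc

theorem distinct :
    [v1, v2, v3, v4, v5, v6, v7].Pairwise (· ≠ ·) ∧ [v7, v6, v5, v4, v3, v2, v1].Pairwise (· ≠ ·) :=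
  ⟨hc.pairwise_ne, List.pairwise_reverse.mpr (hc.pairwise_ne.imp Ne.symm)⟩

theorem neighborSet_deleteEdges_v1 :
    (G.deleteEdges {s(v2, v3)}).neighborSet v1 = {x, v2, v4} := by
  have hne := hc.distinct
  ext t
  rw [mem_neighborSet, deleteEdges_adj, ← mem_neighborSet, hc.neighborSet_v1]
  simp only [List.pairwise_cons, Set.mem_insert_iff, Set.mem_singleton_iff, Sym2.eq_iff] at hne ⊢
  grind

theorem neighborSet_deleteEdges_v2 :
    (G.deleteEdges {s(v2, v3)}).neighborSet v2 = {v1, v5} := by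
  have hne := hc.distinct
  ext t
  rw [mem_neighborSet, deleteEdges_adj, ← mem_neighborSet, hc.neighborSet_v2]
  simp only [List.pairwise_cons, Set.mem_insert_iff, Set.mem_singleton_iff, Sym2.eq_iff] at hne ⊢
  grind

theorem neighborSet_deleteEdges_v3 :
    (G.deleteEdges {s(v2, v3)}).neighborSet v3 = {v4, v6} := by
  have hne := hc.distinct
  ext t
  rw [mem_neighborSet, deleteEdges_adj, ← mem_neighborSet, hc.neighborSet_v3]
  simp only [List.pairwise_cons, Set.mem_insert_iff, Set.mem_singleton_iff, Sym2.eq_iff] at hne ⊢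
  grind

theorem neighborSet_deleteEdges_v4 :
    (G.deleteEdges {s(v2, v3)}).neighborSet v4 = {v1, v3, v7} := by
  have hne := hc.distinct
  ext t
  rw [mem_neighborSet, deleteEdges_adj, ← mem_neighborSet, hc.neighborSet_v4]
  simp only [List.pairwise_cons, Set.mem_insert_iff, Set.mem_singleton_iff, Sym2.eq_iff] at hne ⊢
  grind

theorem neighborSet_deleteEdges_v5 :
    (G.deleteEdges {s(v2, v3)}).neighborSet v5 = {p5, v2} := by
  have hne := hc.distinct
  ext t
  rw [mem_neighborSet, deleteEdges_adj, ← mem_neighborSet, hc.neighborSet_v5]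
  simp only [List.pairwise_cons, Set.mem_insert_iff, Set.mem_singleton_iff, Sym2.eq_iff] at hne ⊢
  grind

theorem neighborSet_deleteEdges_v6 :
    (G.deleteEdges {s(v2, v3)}).neighborSet v6 = {p6, v3} := by
  have hne := hc.distinct
  ext t
  rw [mem_neighborSet, deleteEdges_adj, ← mem_neighborSet, hc.neighborSet_v6]
  simp only [List.pairwise_cons, Set.mem_insert_iff, Set.mem_singleton_iff, Sym2.eq_iff] at hne ⊢
  grind

theorem neighborSet_deleteEdges_v7 :
    (G.deleteEdges {s(v2, v3)}).neighborSet v7 = {p7, v4} := by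
  have hne := hc.distinct
  ext t
  rw [mem_neighborSet, deleteEdges_adj, ← mem_neighborSet, hc.neighborSet_v7]
  simp only [List.pairwise_cons, Set.mem_insert_iff, Set.mem_singleton_iff, Sym2.eq_iff] at hne ⊢
  grind

theorem exists_isProperEdgeColoring_of_boundary_ne {c : Sym2 V → Fin 3}
    (hD : (G.deleteEdges {s(v2, v3)}).IsProperEdgeColoring c)
    (h : c s(v5, p5) ≠ c s(v1, x) ∨ c s(v7, p7) ≠ c s(v1, x)) :
    ∃ c' : Sym2 V → Fin 3, G.IsProperEdgeColoring c' := by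
  classical
  obtain ⟨f12, f41, h1, f23, f25, h2, h5, f34, f36, h3, h6, f47, h4, h7⟩ :=
    exists_inner_colors _ _ (c s(v6, p6)) _ h
  have hne : _ ∧ _ ∧ _ ∧ _ ∧ _ ∧ _ :=
    ⟨hc.distinct, hc.x_ne_v2, hc.x_ne_v4, hc.p5_ne_v2, hc.p6_ne_v3, hc.p7_ne_v4⟩
  simp only [List.pairwise_cons, List.mem_cons, forall_eq_or_imp] at hne
  refine ⟨fun e => if e = s(v1, v2) then f12 else if e = s(v2, v3) then f23
    else if e = s(v3, v4) then f34 else if e = s(v1, v4) then f41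
    else if e = s(v2, v5) then f25 else if e = s(v3, v6) then f36
    else if e = s(v4, v7) then f47 else c e, fun u => ?_⟩
  by_cases hu : u = v1 ∨ u = v2 ∨ u = v3 ∨ u = v4 ∨ u = v5 ∨ u = v6 ∨ u = v7
  · rcases hu with rfl | rfl | rfl | rfl | rfl | rfl | rfl
    · rw [hc.neighborSet_v1]
      exact Set.injOn_triple (by simpa [Sym2.eq_iff, hne] using h1)
    · rw [hc.neighborSet_v2]
      exact Set.injOn_triple (by simpa [Sym2.eq_iff, hne] using h2)
    · rw [hc.neighborSet_v3]
      exact Set.injOn_triple (by simpa [Sym2.eq_iff, hne] using h3)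
    · rw [hc.neighborSet_v4]
      exact Set.injOn_triple (by simpa [Sym2.eq_iff, hne] using h4)
    · rw [hc.neighborSet_v5, Set.injOn_pair]
      simp [hne, h5.symm]
    · rw [hc.neighborSet_v6, Set.injOn_pair]
      simp [hne, h6.symm]
    · rw [hc.neighborSet_v7, Set.injOn_pair]
      simp [hne, h7.symm]
  · simp only [not_or] at hu
    have hN : G.neighborSet u = (G.deleteEdges {s(v2, v3)}).neighborSet u := by
      ext w
      simp [hu]
    rw [hN]
    exact (hD u).congr fun w _ => by simp [hu]

section Obstructed

variable (hG : ¬ ∃ c : Sym2 V → Fin 3, G.IsProperEdgeColoring c) {c : Sym2 V → Fin 3}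
  (hD : (G.deleteEdges {s(v2, v3)}).IsProperEdgeColoring c)
include hG hD

theorem boundary_colors_eq : c s(v5, p5) = c s(v1, x) ∧ c s(v7, p7) = c s(v1, x) := by
  by_contra h
  exact hG (hc.exists_isProperEdgeColoring_of_boundary_ne hD (not_and_or.mp h))

theorem colors_around_cycle :
    c s(v1, v2) ≠ c s(v1, x) ∧ c s(v1, v4) ≠ c s(v1, x) ∧ c s(v1, v2) ≠ c s(v1, v4) ∧
      c s(v2, v5) = c s(v1, v4) ∧ c s(v3, v4) = c s(v1, x) ∧ c s(v3, v6) ≠ c s(v1, x) := by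
  obtain ⟨h5, h7⟩ := hc.boundary_colors_eq hG hD
  have hne := hc.distinct
  simp only [List.pairwise_cons, List.mem_cons, forall_eq_or_imp] at hne
  have n1 := hc.neighborSet_deleteEdges_v1
  have n2 := hc.neighborSet_deleteEdges_v2
  have n3 := hc.neighborSet_deleteEdges_v3
  have n4 := hc.neighborSet_deleteEdges_v4
  have n5 := hc.neighborSet_deleteEdges_v5
  have n7 := hc.neighborSet_deleteEdges_v7
  have : c s(v1, x) ≠ c s(v1, v2) := (hD v1).ne (by simp [n1]) (by simp [n1]) hc.x_ne_v2
  have : c s(v1, x) ≠ c s(v1, v4) := (hD v1).ne (by simp [n1]) (by simp [n1]) hc.x_ne_v4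
  have : c s(v1, v2) ≠ c s(v1, v4) := (hD v1).ne (by simp [n1]) (by simp [n1]) (by grind)
  have : c s(v2, v1) ≠ c s(v2, v5) := (hD v2).ne (by simp [n2]) (by simp [n2]) (by grind)
  have : c s(v5, p5) ≠ c s(v5, v2) := (hD v5).ne (by simp [n5]) (by simp [n5]) hc.p5_ne_v2
  have : c s(v4, v1) ≠ c s(v4, v3) := (hD v4).ne (by simp [n4]) (by simp [n4]) (by grind)
  have : c s(v4, v1) ≠ c s(v4, v7) := (hD v4).ne (by simp [n4]) (by simp [n4]) (by grind)
  have : c s(v4, v3) ≠ c s(v4, v7) := (hD v4).ne (by simp [n4]) (by simp [n4]) (by grind)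
  have : c s(v7, p7) ≠ c s(v7, v4) := (hD v7).ne (by simp [n7]) (by simp [n7]) hc.p7_ne_v4
  have : c s(v3, v4) ≠ c s(v3, v6) := (hD v3).ne (by simp [n3]) (by simp [n3]) (by grind)
  grind [Sym2.eq_swap]

theorem reachable_v2_v5 :
    ((G.deleteEdges {s(v2, v3)}).kempeGraph c (c s(v1, x)) (c s(v1, v2))).Reachable v3 v2 ∧
      ((G.deleteEdges {s(v2, v3)}).kempeGraph c (c s(v1, x)) (c s(v1, v2))).Reachable v3 v5 := by
  obtain ⟨h5, -⟩ := hc.boundary_colors_eq hG hD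
  obtain ⟨hα, -, -, -, h34, -⟩ := hc.colors_around_cycle hG hD
  set d := (G.deleteEdges {s(v2, v3)}).kempeSwap c (c s(v1, x)) (c s(v1, v2)) v3 with hd_def
  have hd : (G.deleteEdges {s(v2, v3)}).IsProperEdgeColoring d := hD.kempeSwap
  obtain ⟨h5', -⟩ := hc.boundary_colors_eq hG hd
  obtain ⟨hα', -, -, -, h34', -⟩ := hc.colors_around_cycle hG hd
  -- the swap gives `v3v4` the colour `c(v1v2)`; as `d(v1x) = d(v3v4)` as well, the edges
  -- `v1v2` and `v5p5` must have changed colour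
  have e34 : d s(v3, v4) = c s(v1, v2) := by
    rw [hd_def, kempeSwap_of_reachable Reachable.rfl, h34, Equiv.swap_apply_left]
  constructor
  · refine reachable_of_kempeSwap_ne (w := v1)
      (by rw [← mem_neighborSet, hc.neighborSet_deleteEdges_v2]; simp) ?_
    change d s(v2, v1) ≠ c s(v2, v1)
    rw [Sym2.eq_swap (a := v2) (b := v1)]
    exact fun h => hα' (h.trans (e34.symm.trans h34'))
  · refine reachable_of_kempeSwap_ne (w := p5)
      (by rw [← mem_neighborSet, hc.neighborSet_deleteEdges_v5]; simp) ?_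
    change d s(v5, p5) ≠ c s(v5, p5)
    rw [h5', ← h34', e34, h5]
    exact hα

theorem false_of_third_leaf [Fintype V]
    [DecidableRel ((G.deleteEdges {s(v2, v3)}).kempeGraph c (c s(v1, x)) (c s(v1, v2))).Adj]
    {t : V} (ht2 : v2 ≠ t) (ht5 : v5 ≠ t)
    (hr : ((G.deleteEdges {s(v2, v3)}).kempeGraph c (c s(v1, x)) (c s(v1, v2))).Reachable v3 t)
    (hdeg : ((G.deleteEdges {s(v2, v3)}).kempeGraph c (c s(v1, x)) (c s(v1, v2))).degree t ≤ 1) :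
    False := by
  obtain ⟨-, hβ, hαβ, h25, -, -⟩ := hc.colors_around_cycle hG hD
  obtain ⟨r2, r5⟩ := hc.reachable_v2_v5 hG hD
  have h52 : c s(v5, v2) = c s(v1, v4) := by rw [Sym2.eq_swap, h25]
  have hne := hc.distinct
  simp only [List.pairwise_cons, List.mem_cons, forall_eq_or_imp] at hne
  refine hD.false_of_kempe_leaves (a := c s(v1, x)) (b := c s(v1, v2)) (v := v3) (by grind)
    ht2 ht5 ?_
  rintro u (rfl | rfl | rfl)
  · exact ⟨r2, degree_kempeGraph_le_one hc.neighborSet_deleteEdges_v2.subset (h25 ▸ hβ)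
      (h25 ▸ hαβ.symm)⟩
  · exact ⟨r5, degree_kempeGraph_le_one hc.neighborSet_deleteEdges_v5.subset (h52 ▸ hβ)
      (h52 ▸ hαβ.symm)⟩
  · exact ⟨hr, hdeg⟩

variable [Finite V]

theorem false_of_v3v6_eq_v1v4 (h36 : c s(v3, v6) = c s(v1, v4)) : False := by
  classical
  have := Fintype.ofFinite V
  obtain ⟨-, hβ, hαβ, -, -, -⟩ := hc.colors_around_cycle hG hD
  have hne := hc.distinct
  simp only [List.pairwise_cons, List.mem_cons, forall_eq_or_imp] at hne
  exact hc.false_of_third_leaf hG hD (by grind) (by grind) Reachable.rfl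
    (degree_kempeGraph_le_one hc.neighborSet_deleteEdges_v3.subset (h36 ▸ hβ) (h36 ▸ hαβ.symm))

theorem false_of_v3v6_eq_v1v2_of_v6p6_eq_v1v4 (h36 : c s(v3, v6) = c s(v1, v2))
    (h6 : c s(v6, p6) = c s(v1, v4)) : False := by
  classical
  have := Fintype.ofFinite V
  obtain ⟨-, hβ, hαβ, -, -, -⟩ := hc.colors_around_cycle hG hD
  have hne := hc.distinct
  simp only [List.pairwise_cons, List.mem_cons, forall_eq_or_imp] at hne
  have h36' : (G.deleteEdges {s(v2, v3)}).Adj v3 v6 := by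
    rw [← mem_neighborSet, hc.neighborSet_deleteEdges_v3]
    simp
  exact hc.false_of_third_leaf hG hD (by grind) (by grind) (Adj.reachable ⟨h36', Or.inr h36⟩)
    (degree_kempeGraph_le_one (hc.neighborSet_deleteEdges_v6.trans (Set.pair_comm _ _)).subset
      (h6 ▸ hβ) (h6 ▸ hαβ.symm))

theorem false_of_v3v6_eq_v1v2_of_v6p6_eq_v1x (h36 : c s(v3, v6) = c s(v1, v2))
    (h6 : c s(v6, p6) = c s(v1, x)) : False := by
  classical
  obtain ⟨-, hβ, -, -, h34, -⟩ := hc.colors_around_cycle hG hD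
  have hne := hc.distinct
  simp only [List.pairwise_cons, List.mem_cons, forall_eq_or_imp] at hne
  have hd := hD.update (u := v3) (w := v6) (k := c s(v1, v4)) ?_ ?_
  · refine hc.false_of_v3v6_eq_v1v4 hG hd ?_
    rw [Function.update_self, Function.update_of_ne (by simp [hne])]
  · rw [hc.neighborSet_deleteEdges_v3]
    rintro t (rfl | rfl) ht
    · rw [h34]
      exact hβ.symm
    · exact absurd rfl ht
  · rw [hc.neighborSet_deleteEdges_v6]
    rintro t (rfl | rfl) ht
    · rw [h6]
      exact hβ.symm
    · exact absurd rfl ht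

end Obstructed

theorem edgeColorable_of_deleteEdges [Finite V]
    (h : EdgeColorable (G.deleteEdges {s(v2, v3)}) 3) : EdgeColorable G 3 := by
  by_contra hG
  rw [edgeColorable_iff_exists_isProperEdgeColoring] at h hG
  obtain ⟨c, hD⟩ := h
  obtain ⟨hα, hβ, hαβ, -, -, h36⟩ := hc.colors_around_cycle hG hD
  have h6 : c s(v6, p6) ≠ c s(v3, v6) := by
    have n6 := hc.neighborSet_deleteEdges_v6
    rw [Sym2.eq_swap (a := v3)]
    exact (hD v6).ne (by simp [n6]) (by simp [n6]) hc.p6_ne_v3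
  rcases (by omega : c s(v3, v6) = c s(v1, v4) ∨ c s(v3, v6) = c s(v1, v2)) with h36 | h36
  · exact hc.false_of_v3v6_eq_v1v4 hG hD h36
  rcases (by omega : c s(v6, p6) = c s(v1, v4) ∨ c s(v6, p6) = c s(v1, x)) with h6 | h6
  · exact hc.false_of_v3v6_eq_v1v2_of_v6p6_eq_v1v4 hG hD h36 h6
  · exact hc.false_of_v3v6_eq_v1v2_of_v6p6_eq_v1x hG hD h36 h6

end FourCycleConfig

theorem exists_fourCycleConfig {V : Type*} [Finite V] {G : SimpleGraph V}
    {v1 v2 v3 v4 v5 v6 v7 : V} (hne : [v1, v2, v3, v4, v5, v6, v7].Pairwise (· ≠ ·))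
    (hd1 : deg G v1 = 3) (hd2 : deg G v2 = 3) (hd3 : deg G v3 = 3) (hd4 : deg G v4 = 3)
    (hd5 : deg G v5 = 2) (hd6 : deg G v6 = 2) (hd7 : deg G v7 = 2)
    (h12 : G.Adj v1 v2) (h23 : G.Adj v2 v3) (h34 : G.Adj v3 v4) (h41 : G.Adj v4 v1)
    (h25 : G.Adj v2 v5) (h36 : G.Adj v3 v6) (h47 : G.Adj v4 v7) :
    ∃ x p5 p6 p7, FourCycleConfig G v1 v2 v3 v4 v5 v6 v7 x p5 p6 p7 := by
  have hne' := hne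
  simp only [List.pairwise_cons, List.mem_cons, forall_eq_or_imp] at hne'
  obtain ⟨x, hx, hN1⟩ := exists_neighborSet_eq_insert_s10 (G := G) (v := v1) (s := {v2, v4})
    (by simp [Set.insert_subset_iff, h12, h41.symm]) (by rw [Set.ncard_pair (by grind), hd1])
  obtain ⟨p5, hp5, hN5⟩ := exists_neighborSet_eq_insert_s10 (G := G) (v := v5) (s := {v2})
    (by simp [h25.symm]) (by rw [Set.ncard_singleton, hd5])
  obtain ⟨p6, hp6, hN6⟩ := exists_neighborSet_eq_insert_s10 (G := G) (v := v6) (s := {v3})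
    (by simp [h36.symm]) (by rw [Set.ncard_singleton, hd6])
  obtain ⟨p7, hp7, hN7⟩ := exists_neighborSet_eq_insert_s10 (G := G) (v := v7) (s := {v4})
    (by simp [h47.symm]) (by rw [Set.ncard_singleton, hd7])
  have hN2 := neighborSet_eq_of_subset_of_deg_le (G := G) (v := v2) (s := {v1, v3, v5})
    (by simp [Set.insert_subset_iff, h12.symm, h23, h25])
    (by rw [hd2, Set.ncard_eq_three.mpr ⟨v1, v3, v5, by grind, by grind, by grind, rfl⟩])
  have hN3 := neighborSet_eq_of_subset_of_deg_le (G := G) (v := v3) (s := {v2, v4, v6})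
    (by simp [Set.insert_subset_iff, h23.symm, h34, h36])
    (by rw [hd3, Set.ncard_eq_three.mpr ⟨v2, v4, v6, by grind, by grind, by grind, rfl⟩])
  have hN4 := neighborSet_eq_of_subset_of_deg_le (G := G) (v := v4) (s := {v1, v3, v7})
    (by simp [Set.insert_subset_iff, h41, h34.symm, h47])
    (by rw [hd4, Set.ncard_eq_three.mpr ⟨v1, v3, v7, by grind, by grind, by grind, rfl⟩])
  simp only [Set.mem_insert_iff, Set.mem_singleton_iff, not_or] at hx hp5 hp6 hp7
  exact ⟨x, p5, p6, p7, hne, hx.1, hx.2, hp5, hp6, hp7, hN1, hN2, hN3, hN4, hN5, hN6, hN7⟩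

/-- No 3-critical graph contains a 4-cycle `v1 v2 v3 v4` of
3-vertices, three of which (`v2`, `v3`, `v4`) have pairwise distinct
2-neighbors `v5`, `v6`, `v7` off the cycle. -/
theorem stmt_10 {V : Type} [Fintype V] (G : SimpleGraph V) (hG : IsCritical 3 G) :
    ¬ ∃ v1 v2 v3 v4 v5 v6 v7 : V,
      [v1, v2, v3, v4, v5, v6, v7].Pairwise (· ≠ ·) ∧
      deg G v1 = 3 ∧ deg G v2 = 3 ∧ deg G v3 = 3 ∧ deg G v4 = 3 ∧
      deg G v5 = 2 ∧ deg G v6 = 2 ∧ deg G v7 = 2 ∧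
      G.Adj v1 v2 ∧ G.Adj v2 v3 ∧ G.Adj v3 v4 ∧ G.Adj v4 v1 ∧
      G.Adj v2 v5 ∧ G.Adj v3 v6 ∧ G.Adj v4 v7 := by
  rintro ⟨v1, v2, v3, v4, v5, v6, v7, hne, hd1, hd2, hd3, hd4, hd5, hd6, hd7,
    h12, h23, h34, h41, h25, h36, h47⟩
  obtain ⟨-, -, hχ, hχ'⟩ := hG
  obtain ⟨x, p5, p6, p7, hc⟩ :=
    exists_fourCycleConfig hne hd1 hd2 hd3 hd4 hd5 hd6 hd7 h12 h23 h34 h41 h25 h36 h47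
  have hcol := edgeColorable_chromIndex_s10 (G.deleteEdges {s(v2, v3)})
  rw [hχ' _ h23] at hcol
  have := chromIndex_le_of_edgeColorable (hc.edgeColorable_of_deleteEdges hcol)
  omega
end

section
/- The graph P* obtained from the Petersen graph by deleting one vertex has 9 vertices, 12 edges, maximum degree 3, and is 3-critical: its chromatic index is 4, and deleting any single edge yields a graph with chromatic index 3. In particular, P* has average degree exactly 2 + 2/3. -/
/-!
Write `aᵢ = {0, i}`, `bᵢ = {1, i}` and `uₖ = {2, 3, 4} \ {k}` for `i, k ∈ {2, 3, 4}`. Then `P*` is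
`K₃,₃` on the `a`'s and `b`'s with the perfect matching `aₖbₖ` subdivided by `uₖ`. Permutations
of `Fin 5` fixing `{0, 1}` act on `P*` with two orbits on edges: the six edges at the `uₖ` (the
neighbours of the deleted vertex) and the six edges `aᵢbⱼ`. So criticality reduces to
3-edge-colourings of `P* - e` for one edge `e` of each kind; three colours are also necessary
there because some vertex of degree 3 avoids `e`. Adding a fourth colour on `e` colours `P*`, and
that three colours do not suffice is a finite search.
-/

open SimpleGraph

section EdgeColorable

variable {α β V : Type*} {A : SimpleGraph α} {B : SimpleGraph β} {G : SimpleGraph V} {n : ℕ}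

lemma EdgeColorable.mono {m : ℕ} (h : EdgeColorable G m) (hmn : m ≤ n) : EdgeColorable G n := by
  obtain ⟨C, hC⟩ := h
  exact ⟨fun e => Fin.castLE hmn (C e),
    fun e₁ e₂ hne hv h => hC e₁ e₂ hne hv (Fin.castLE_injective hmn h)⟩

lemma EdgeColorable.of_copy (f : Copy A B) (h : EdgeColorable B n) : EdgeColorable A n := by
  obtain ⟨C, hC⟩ := h
  exact ⟨C ∘ f.mapEdgeSet, fun e₁ e₂ hne ⟨v, hv₁, hv₂⟩ => hC _ _ (f.mapEdgeSet.injective.ne hne)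
    ⟨f v, Sym2.mem_map.2 ⟨v, hv₁, rfl⟩, Sym2.mem_map.2 ⟨v, hv₂, rfl⟩⟩⟩

lemma EdgeColorable.deg_le (h : EdgeColorable G n) (v : V) : deg G v ≤ n := by
  obtain ⟨C, hC⟩ := h
  let c : G.neighborSet v → Fin n := fun w => C ⟨s(v, w), w.2⟩
  have hc : Function.Injective c := fun w₁ w₂ h => by
    by_contra hne
    refine hC _ _ (fun heq => hne (Subtype.ext (Sym2.congr_right.1 (congrArg Subtype.val heq))))
      ⟨v, Sym2.mem_mk_left _ _, Sym2.mem_mk_left _ _⟩ h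
  simpa [deg] using Nat.card_le_card_of_injective c hc

lemma EdgeColorable.of_deleteEdges (e : Sym2 V) (h : EdgeColorable (G.deleteEdges {e}) n) :
    EdgeColorable G (n + 1) := by
  classical
  obtain ⟨C, hC⟩ := h
  let C' : G.edgeSet → Fin (n + 1) := fun f =>
    if hf : f.1 = e then Fin.last n else (C ⟨f.1, by simp [f.2, hf]⟩).castSucc
  refine ⟨C', fun f₁ f₂ hne hv => ?_⟩
  by_cases h₁ : f₁.1 = e <;> by_cases h₂ : f₂.1 = e
  · exact absurd (Subtype.ext (h₁.trans h₂.symm)) hne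
  · simpa [C', h₁, h₂] using (Fin.castSucc_lt_last _).ne'
  · simp [C', h₁, h₂]
  · have hne' : (⟨f₁.1, by simp [f₁.2, h₁]⟩ : (G.deleteEdges {e}).edgeSet) ≠
        ⟨f₂.1, by simp [f₂.2, h₂]⟩ :=
      fun heq => hne (Subtype.ext (by simpa using heq))
    simpa [C', h₁, h₂] using hC _ _ hne' hv

lemma edgeColorable_of_matching_cover (M : Fin n → Finset (Sym2 V))
    (hM : ∀ i, ∀ e ∈ M i, ∀ f ∈ M i, e ≠ f → ∀ v ∈ e, v ∉ f)
    (hcover : ∀ e ∈ G.edgeSet, ∃ i, e ∈ M i) : EdgeColorable G n := by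
  choose C hC using fun e : G.edgeSet => hcover e.1 e.2
  refine ⟨C, fun e₁ e₂ hne ⟨v, hv₁, hv₂⟩ heq => ?_⟩
  have h₂ := hC e₂
  rw [← heq] at h₂
  exact hM _ _ (hC e₁) _ h₂ (fun h => hne (Subtype.ext h)) v hv₁ hv₂

lemma chromIndex_congr (f : A ≃g B) : chromIndex A = chromIndex B := by
  have : {n | EdgeColorable A n} = {n | EdgeColorable B n} :=
    Set.ext fun _ => ⟨.of_copy f.symm.toCopy, .of_copy f.toCopy⟩
  rw [chromIndex, chromIndex, this]

lemma chromIndex_eq_succ (h : EdgeColorable G (n + 1)) (h' : ¬ EdgeColorable G n) :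
    chromIndex G = n + 1 :=
  le_antisymm (Nat.sInf_le h) (le_csInf ⟨_, h⟩ fun _ hm => by
    by_contra! hlt
    exact h' (hm.mono (by omega)))

lemma chromIndex_eq_of_deg_eq (h : EdgeColorable G n) {v : V} (hv : deg G v = n) :
    chromIndex G = n :=
  le_antisymm (Nat.sInf_le h) (le_csInf ⟨_, h⟩ fun _ hm => hv ▸ hm.deg_le v)

lemma deg_deleteEdges_of_notMem {e : Sym2 V} {v : V} (hv : v ∉ e) :
    deg (G.deleteEdges {e}) v = deg G v := by
  refine congrArg Set.ncard (Set.ext fun w => ?_)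
  simpa using fun _ (h : s(v, w) = e) => hv (h ▸ Sym2.mem_mk_left v w)

def SimpleGraph.Iso.deleteEdges (φ : A ≃g B) (e : Sym2 α) :
    A.deleteEdges {e} ≃g B.deleteEdges {e.map φ} where
  toEquiv := φ.toEquiv
  map_rel_iff' {x y} := by
    rw [deleteEdges_adj, deleteEdges_adj]
    change B.Adj (φ x) (φ y) ∧ s(φ x, φ y) ∉ ({e.map φ} : Set _) ↔
      A.Adj x y ∧ s(x, y) ∉ ({e} : Set _)
    rw [φ.map_adj_iff, Set.mem_singleton_iff, Set.mem_singleton_iff, ← Sym2.map_mk,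
      (Sym2.map.injective φ.injective).eq_iff]

end EdgeColorable

def Petersen.isoOfPerm (σ : Equiv.Perm (Fin 5)) : Petersen ≃g Petersen where
  toEquiv := σ.finsetCongr.subtypeEquiv fun s => by simp [Equiv.finsetCongr_apply]
  map_rel_iff' := Finset.disjoint_map _

def PStar.isoOfFix (φ : Petersen ≃g Petersen) (hφ : φ pstarV = pstarV) : PStar ≃g PStar where
  toEquiv := φ.toEquiv.subtypeEquiv fun _ => (φ.injective.ne_iff' hφ).symm
  map_rel_iff' := φ.map_rel_iff

namespace PStar

instance : DecidableRel PStar.Adj := fun a b => inferInstanceAs (Decidable (Disjoint a.1.1 b.1.1))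

def pv (s : Finset (Fin 5)) (hs : s.card = 2 := by decide)
    (hs' : (⟨s, hs⟩ : KVert) ≠ pstarV := by decide) : PV :=
  ⟨⟨s, hs⟩, hs'⟩

def nearEdge : Sym2 PV := s(pv {2, 3}, pv {0, 4})

def farEdge : Sym2 PV := s(pv {0, 2}, pv {1, 3})

lemma card_vertices : Fintype.card PV = 9 := by decide

lemma ncard_edgeSet : PStar.edgeSet.ncard = 12 := by
  rw [Set.ncard_eq_toFinset_card']
  decide

lemma deg_eq_card_neighborFinset (v : PV) : deg PStar v = (PStar.neighborFinset v).card :=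
  Set.ncard_eq_toFinset_card' _

lemma deg_le_three (v : PV) : deg PStar v ≤ 3 := by
  rw [deg_eq_card_neighborFinset]
  revert v
  decide

lemma deg_eq_three {v : PV} (hv : ¬ Disjoint v.1.1 {0, 1}) : deg PStar v = 3 := by
  rw [deg_eq_card_neighborFinset]
  revert v
  decide

lemma exists_iso_map_eq_nearEdge_or_farEdge :
    ∀ e ∈ PStar.edgeFinset, ∃ σ ∈ [1, Equiv.swap 2 4, Equiv.swap 3 4, Equiv.swap 0 1,
      Equiv.swap 0 1 * Equiv.swap 2 4, Equiv.swap 0 1 * Equiv.swap 3 4],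
      ∃ h : Petersen.isoOfPerm σ pstarV = pstarV,
        e.map (isoOfFix _ h) = nearEdge ∨ e.map (isoOfFix _ h) = farEdge := by
  decide

lemma edgeColorable_deleteEdges_nearEdge : EdgeColorable (PStar.deleteEdges {nearEdge}) 3 := by
  refine edgeColorable_of_matching_cover
    ![{s(pv {0,2}, pv {1,3}), s(pv {0,3}, pv {1,2}), s(pv {1,4}, pv {2,3})},
      {s(pv {0,2}, pv {1,4}), s(pv {0,3}, pv {2,4}), s(pv {0,4}, pv {1,3}), s(pv {1,2}, pv {3,4})},
      {s(pv {0,2}, pv {3,4}), s(pv {0,3}, pv {1,4}), s(pv {0,4}, pv {1,2}), s(pv {1,3}, pv {2,4})}]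
    (by decide) ?_
  rw [edgeSet_deleteEdges, ← coe_edgeFinset]
  intro e he
  revert e
  decide

lemma edgeColorable_deleteEdges_farEdge : EdgeColorable (PStar.deleteEdges {farEdge}) 3 := by
  refine edgeColorable_of_matching_cover
    ![{s(pv {0,2}, pv {1,4}), s(pv {0,3}, pv {1,2}), s(pv {0,4}, pv {2,3}), s(pv {1,3}, pv {2,4})},
      {s(pv {0,2}, pv {3,4}), s(pv {0,3}, pv {1,4}), s(pv {0,4}, pv {1,2})},
      {s(pv {0,3}, pv {2,4}), s(pv {0,4}, pv {1,3}), s(pv {1,2}, pv {3,4}), s(pv {1,4}, pv {2,3})}]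
    (by decide) ?_
  rw [edgeSet_deleteEdges, ← coe_edgeFinset]
  intro e he
  revert e
  decide

lemma chromIndex_deleteEdges {e : Sym2 PV} (he : e ∈ PStar.edgeSet) :
    chromIndex (PStar.deleteEdges {e}) = 3 := by
  obtain ⟨σ, -, hσ, he'⟩ := exists_iso_map_eq_nearEdge_or_farEdge e (mem_edgeFinset.2 he)
  rw [chromIndex_congr ((isoOfFix _ hσ).deleteEdges e)]
  rcases he' with h | h <;> rw [h]
  · refine chromIndex_eq_of_deg_eq edgeColorable_deleteEdges_nearEdge (v := pv {0, 2}) ?_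
    rw [deg_deleteEdges_of_notMem (by decide), deg_eq_three (by decide)]
  · refine chromIndex_eq_of_deg_eq edgeColorable_deleteEdges_farEdge (v := pv {0, 3}) ?_
    rw [deg_deleteEdges_of_notMem (by decide), deg_eq_three (by decide)]

/-- Stated with the hypotheses interleaved so that `decide` discards a partial colouring as soon as
it becomes improper, instead of enumerating all `3 ^ 12` colourings. -/
lemma no_proper_three_coloring : ∀ c₀ c₁ : Fin 3, c₀ ≠ c₁ →
    ∀ c₂ : Fin 3, c₀ ≠ c₂ → c₁ ≠ c₂ →
    ∀ c₃ : Fin 3, c₁ ≠ c₃ →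
    ∀ c₄ : Fin 3, c₁ ≠ c₄ → c₃ ≠ c₄ →
    ∀ c₅ : Fin 3, c₃ ≠ c₅ →
    ∀ c₆ : Fin 3, c₃ ≠ c₆ → c₅ ≠ c₆ →
    ∀ c₇ : Fin 3, c₂ ≠ c₇ → c₅ ≠ c₇ →
    ∀ c₈ : Fin 3, c₅ ≠ c₈ → c₇ ≠ c₈ →
    ∀ c₉ : Fin 3, c₀ ≠ c₉ → c₈ ≠ c₉ →
    ∀ c₁₀ : Fin 3, c₄ ≠ c₁₀ → c₈ ≠ c₁₀ → c₉ ≠ c₁₀ →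
    ∀ c₁₁ : Fin 3, c₀ ≠ c₁₁ → c₆ ≠ c₁₁ → c₉ ≠ c₁₁ → False := by
  decide

lemma not_edgeColorable_three : ¬ EdgeColorable PStar 3 := by
  rintro ⟨C, hC⟩
  have hC' (e₁ e₂ : PStar.edgeSet) (h : e₁ ≠ e₂ ∧ ∃ v, v ∈ e₁.1 ∧ v ∈ e₂.1) : C e₁ ≠ C e₂ :=
    hC e₁ e₂ h.1 h.2
  let e (x y : PV) (h : PStar.Adj x y := by decide) : PStar.edgeSet := ⟨s(x, y), h⟩
  exact no_proper_three_coloring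
    (C (e (pv {0,2}) (pv {1,3}))) (C (e (pv {0,2}) (pv {1,4}))) (hC' _ _ (by decide))
    (C (e (pv {0,2}) (pv {3,4}))) (hC' _ _ (by decide)) (hC' _ _ (by decide))
    (C (e (pv {0,3}) (pv {1,4}))) (hC' _ _ (by decide))
    (C (e (pv {1,4}) (pv {2,3}))) (hC' _ _ (by decide)) (hC' _ _ (by decide))
    (C (e (pv {0,3}) (pv {1,2}))) (hC' _ _ (by decide))
    (C (e (pv {0,3}) (pv {2,4}))) (hC' _ _ (by decide)) (hC' _ _ (by decide))
    (C (e (pv {1,2}) (pv {3,4}))) (hC' _ _ (by decide)) (hC' _ _ (by decide))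
    (C (e (pv {0,4}) (pv {1,2}))) (hC' _ _ (by decide)) (hC' _ _ (by decide))
    (C (e (pv {0,4}) (pv {1,3}))) (hC' _ _ (by decide)) (hC' _ _ (by decide))
    (C (e (pv {0,4}) (pv {2,3}))) (hC' _ _ (by decide)) (hC' _ _ (by decide)) (hC' _ _ (by decide))
    (C (e (pv {1,3}) (pv {2,4}))) (hC' _ _ (by decide)) (hC' _ _ (by decide)) (hC' _ _ (by decide))

lemma chromIndex_eq_four : chromIndex PStar = 4 :=
  chromIndex_eq_succ (edgeColorable_deleteEdges_nearEdge.of_deleteEdges _) not_edgeColorable_three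

end PStar

/-- `P*` has 9 vertices, 12 edges, maximum degree 3, is
3-critical, and has average degree exactly `2 + 2/3`. -/
theorem stmt_17 :
    Fintype.card PV = 9 ∧
    PStar.edgeSet.ncard = 12 ∧
    (∀ v, deg PStar v ≤ 3) ∧ (∃ v, deg PStar v = 3) ∧
    IsCritical 3 PStar ∧
    (2 * PStar.edgeSet.ncard : ℚ) / Fintype.card PV = 2 + 2/3 := by
  have hdeg : ∃ v, deg PStar v = 3 := ⟨PStar.pv {0, 2}, PStar.deg_eq_three (by decide)⟩
  refine ⟨PStar.card_vertices, PStar.ncard_edgeSet, PStar.deg_le_three, hdeg,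
    ⟨PStar.deg_le_three, hdeg, PStar.chromIndex_eq_four, fun _ => PStar.chromIndex_deleteEdges⟩, ?_⟩
  rw [PStar.ncard_edgeSet, PStar.card_vertices]
  norm_num
end
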